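/- arXiv:1904.11926 — 3 statements merged into one kernel-verified Lean document; each statement's English description precedes it below -/
import Mathlib

section
/- (Higman's criterion, one direction) Let E : C → D and F : D → C be biadjoint functors between categories. If M ∈ C is a direct summand (retract) of F(N) for some N ∈ D, then the unit morphism η_M : M → FE(M) of the adjunction (E,F) has a left inverse, and M is a direct summand of FE(M). -/
open CategoryTheory

/-- Higman's criterion, one direction: If `E : C ⥤ D` and `F : D ⥤ C` are
biadjoint and `M` is a retract of `F(N)` for some `N`, then the unit `η_M : M ⟶ FE(M)`
has a left inverse, and `M` is a direct summand of `FE(M)`. -/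
theorem stmt_4 {C D : Type*} [Category C] [Category D]
    (E : C ⥤ D) (F : D ⥤ C) (adj₁ : E ⊣ F) (adj₂ : F ⊣ E)
    (M : C) (N : D) (ι : M ⟶ F.obj N) (π : F.obj N ⟶ M) (hretract : ι ≫ π = 𝟙 M) :
    ∃ r : F.obj (E.obj M) ⟶ M, adj₁.unit.app M ≫ r = 𝟙 M := by
  refine ⟨F.map (E.map ι) ≫ F.map (adj₁.counit.app N) ≫ π, ?_⟩
  have h := adj₁.unit.naturality ι
  simp only [Functor.id_map, Functor.comp_map] at h
  rw [← Category.assoc, ← h, Category.assoc, ← Category.assoc (adj₁.unit.app (F.obj N)),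
    adj₁.right_triangle_components]
  simp [hretract]
end

section
/- Let E, F be exact biadjoint functors between module categories of finite-dimensional algebras, and M a module with finite projective resolution P_•. If M is a direct summand of FE(M), then each projective term P_n of a minimal projective resolution of M is a direct summand of FE(P_n). -/
/-!
Lift `ι` and `π` to chain maps `f : P → FE(P)` and `g : FE(P) → P`; this makes sense because the
exact functor `FE` preserves projectives, so `FE(P)` resolves `FE(M)`. Since `g ∘ f` lifts `𝟙 M`,
it is homotopic to the identity, `g ∘ f - 1 = dh + hd`, and minimality of `P` puts this map into
`J(A) • P_n`. The radical of a finite-dimensional algebra is nilpotent, so `g_n ∘ f_n` is unipotent,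
hence invertible, and `(g_n ∘ f_n)⁻¹ ∘ f_n` splits `g_n`.
-/

open CategoryTheory Limits

/-- A projective resolution is minimal if each differential maps into the radical
`J(A)·P_{n-1}` of the next term. -/
def IsMinimalResolution {A : Type} [Ring A] {M : ModuleCat A}
    (P : ProjectiveResolution M) : Prop :=
  ∀ n : ℕ, LinearMap.range (P.complex.d (n + 1) n).hom ≤
    (⊥ : Ideal A).jacobson • (⊤ : Submodule A (P.complex.X n))

section
variable {R : Type*} [Ring R] {I : Ideal R}

theorem Module.End.isUnit_of_range_sub_one_le_smul_top (hI : IsNilpotent I)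
    {N : Type*} [AddCommGroup N] [Module R N] {φ : Module.End R N}
    (h : LinearMap.range (φ - 1) ≤ I • ⊤) : IsUnit φ := by
  set ν := φ - 1
  have hpow : ∀ m, LinearMap.range (ν ^ m) ≤ I ^ m • ⊤ := by
    intro m
    induction m with
    | zero => simp [Submodule.pow_zero, Ideal.one_eq_top]
    | succ m ih =>
      rw [pow_succ', Module.End.mul_eq_comp, LinearMap.range_comp, Submodule.pow_succ,
        Submodule.mul_smul]
      calc Submodule.map ν (LinearMap.range (ν ^ m))
          ≤ Submodule.map ν (I ^ m • ⊤) := Submodule.map_mono ih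
        _ = I ^ m • Submodule.map ν ⊤ := Submodule.map_smul'' _ _ _
        _ ≤ I ^ m • I • ⊤ := smul_mono_right _ (LinearMap.range_eq_map ν ▸ h)
  obtain ⟨m, hm⟩ := hI
  have hν : IsNilpotent ν :=
    ⟨m, LinearMap.range_eq_bot.mp (by simpa [hm] using hpow m)⟩
  simpa [ν] using hν.isUnit_one_add

theorem Homotopy.range_sub_le_smul_top {C D : ChainComplex (ModuleCat R) ℕ}
    (hC : ∀ n, LinearMap.range (C.d (n + 1) n).hom ≤ I • ⊤)
    (hD : ∀ n, LinearMap.range (D.d (n + 1) n).hom ≤ I • ⊤)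
    {φ ψ : C ⟶ D} (h : Homotopy φ ψ) (n : ℕ) :
    LinearMap.range (φ.f n - ψ.f n).hom ≤ I • ⊤ := by
  have hdNext : LinearMap.range (dNext n h.hom).hom ≤ I • ⊤ := by
    cases n with
    | zero => simp
    | succ m =>
      rw [dNext_eq h.hom (show (ComplexShape.down ℕ).Rel (m + 1) m by simp),
        ModuleCat.hom_comp, LinearMap.range_comp]
      calc Submodule.map (h.hom m (m + 1)).hom (LinearMap.range (C.d (m + 1) m).hom)
          ≤ Submodule.map (h.hom m (m + 1)).hom (I • ⊤) := Submodule.map_mono (hC m)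
        _ ≤ I • ⊤ := by
          rw [Submodule.map_smul'']
          exact smul_mono_right _ le_top
  have hprevD : LinearMap.range (prevD n h.hom).hom ≤ I • ⊤ := by
    rw [prevD_eq h.hom (show (ComplexShape.down ℕ).Rel (n + 1) n by simp), ModuleCat.hom_comp]
    exact (LinearMap.range_comp_le_range _ _).trans (hD n)
  rw [h.comm n, add_sub_cancel_right, ModuleCat.hom_add]
  exact (LinearMap.range_add_le _ _).trans (sup_le hdNext hprevD)

end

theorem IsMinimalResolution.isIso_f_of_homotopy_id {A : Type} [Ring A] [IsArtinianRing A]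
    {M : ModuleCat A} {P : ProjectiveResolution M}
    (hP : IsMinimalResolution P) {φ : P.complex ⟶ P.complex} (h : Homotopy φ (𝟙 P.complex))
    (n : ℕ) : IsIso (φ.f n) := by
  have hφ : LinearMap.range ((φ.f n).hom - 1) ≤ (⊥ : Ideal A).jacobson • ⊤ :=
    Homotopy.range_sub_le_smul_top hP hP h n
  rw [← isUnit_iff_isIso]
  refine (isUnit_map_iff (ModuleCat.endRingEquiv _) _).mp ?_
  exact Module.End.isUnit_of_range_sub_one_le_smul_top IsArtinianRing.isNilpotent_jacobson_bot hφ

theorem stmt_16_general {k A B : Type} [Field k] [Ring A] [Algebra k A] [FiniteDimensional k A]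
    [Ring B]
    (E : ModuleCat A ⥤ ModuleCat B) (F : ModuleCat B ⥤ ModuleCat A)
    [PreservesFiniteLimits E] [PreservesFiniteColimits E]
    [PreservesFiniteLimits F] [PreservesFiniteColimits F]
    (adj₁ : E ⊣ F) (adj₂ : F ⊣ E)
    (M : ModuleCat A)
    (P : ProjectiveResolution M) (hmin : IsMinimalResolution P)
    (ι : M ⟶ F.obj (E.obj M)) (π : F.obj (E.obj M) ⟶ M) (hretract : ι ≫ π = 𝟙 M) :
    ∀ n : ℕ, ∃ (ιn : P.complex.X n ⟶ F.obj (E.obj (P.complex.X n)))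
      (πn : F.obj (E.obj (P.complex.X n)) ⟶ P.complex.X n), ιn ≫ πn = 𝟙 (P.complex.X n) := by
  intro n
  have : IsArtinianRing A := isArtinian_of_tower k inferInstance
  have : (E ⋙ F).PreservesProjectiveObjects :=
    Functor.preservesProjectiveObjects_of_adjunction_of_preservesEpimorphisms (adj₁.comp adj₂)
  have : (E ⋙ F).Additive := Functor.additive_of_preserves_binary_products _
  let Q := (E ⋙ F).mapProjectiveResolution P
  let f := ProjectiveResolution.lift ι P Q
  let g := ProjectiveResolution.lift π Q P
  have H : Homotopy (f ≫ g) (𝟙 P.complex) :=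
    (ProjectiveResolution.liftCompHomotopy ι π P Q P).symm.trans
      (hretract ▸ ProjectiveResolution.liftIdHomotopy M P)
  have := hmin.isIso_f_of_homotopy_id H n
  have hsplit : (inv ((f ≫ g).f n) ≫ f.f n) ≫ g.f n = 𝟙 (P.complex.X n) := by
    rw [Category.assoc, ← HomologicalComplex.comp_f, IsIso.inv_hom_id]
  exact ⟨_, _, hsplit⟩

/-- Let `E`, `F` be exact biadjoint functors between the module categories
of finite-dimensional algebras `A`, `B` over a field `k`, and `M` an `A`-module with a
minimal finite projective resolution `P_•`. If `M` is a direct summand of `FE(M)`, then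
each term `P_n` of the minimal resolution is a direct summand of `FE(P_n)`. -/
theorem stmt_16 {k A B : Type} [Field k] [Ring A] [Algebra k A] [FiniteDimensional k A]
    [Ring B] [Algebra k B] [FiniteDimensional k B]
    (E : ModuleCat A ⥤ ModuleCat B) (F : ModuleCat B ⥤ ModuleCat A)
    [PreservesFiniteLimits E] [PreservesFiniteColimits E]
    [PreservesFiniteLimits F] [PreservesFiniteColimits F]
    (adj₁ : E ⊣ F) (adj₂ : F ⊣ E)
    (M : ModuleCat A) (hM : Module.Finite A M)
    (P : ProjectiveResolution M) (hmin : IsMinimalResolution P)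
    (hfin : ∃ d : ℕ, ∀ n, d < n → IsZero (P.complex.X n))
    (ι : M ⟶ F.obj (E.obj M)) (π : F.obj (E.obj M) ⟶ M) (hretract : ι ≫ π = 𝟙 M) :
    ∀ n : ℕ, ∃ (ιn : P.complex.X n ⟶ F.obj (E.obj (P.complex.X n)))
      (πn : F.obj (E.obj (P.complex.X n)) ⟶ P.complex.X n), ιn ≫ πn = 𝟙 (P.complex.X n) :=
  stmt_16_general (k := k) E F adj₁ adj₂ M P hmin ι π hretract
end

section
/- Let E : C → D and F : D → C be exact biadjoint functors between module categories of finite-dimensional algebras, ζ = ε ∘ η : 1_C ⇒ 1_C the natural endotransformation from the biadjunction, and B a block of C. If ζ_L ≠ 0 for some simple module L in B, then ζ_M is an isomorphism for every indecomposable M in B, and hence M is a direct summand of FE(M) for every module M in B. -/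
/-!
The biadjunction endotransformation `ζ` of the identity is multiplication by a central element `c`
of `A` (its value at `1` on the regular module). The centre of `A` is a commutative Artinian ring,
so Fitting's lemma attaches to `zc` an idempotent lying in `zc` times the centre, and primitivity
of `z` forces it to be `0` or `z`. It is not `0`: by Schur, `ζ_L` is injective on the simple module
`L`, on which `z` acts trivially, so `zc` is not nilpotent. Hence `zc` is invertible in the block
`z Z(A)`, so `ζ_M` is an isomorphism for every module `M` in the block, decomposable or not, and
`ζ_M = ε_M ∘ η_M` splits `η_M`.
-/

open CategoryTheory Limits

/-- `z` is a primitive central idempotent of `A` (so `zA` is an indecomposable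
two-sided ideal direct factor of `A`, i.e. a block). -/
def IsPrimitiveCentralIdempotent {A : Type} [Ring A] (z : A) : Prop :=
  z ∈ Set.center A ∧ IsIdempotentElem z ∧ z ≠ 0 ∧
    ¬∃ z₁ z₂ : A, z₁ ∈ Set.center A ∧ z₂ ∈ Set.center A ∧
      IsIdempotentElem z₁ ∧ IsIdempotentElem z₂ ∧ z₁ ≠ 0 ∧ z₂ ≠ 0 ∧
      z₁ * z₂ = 0 ∧ z = z₁ + z₂

/-- `r * s` is the Fitting idempotent of multiplication by `r`: it generates the ideal where the
descending chain `r ^ n R` stabilizes. -/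
theorem IsArtinianRing.exists_isIdempotentElem_mul_pow_eq {R : Type*} [CommRing R]
    [IsArtinianRing R] (r : R) :
    ∃ (n : ℕ) (s : R), IsIdempotentElem (r * s) ∧ r ^ n * (r * s) = r ^ n := by
  obtain ⟨m, y, hy⟩ := IsArtinian.exists_pow_succ_smul_dvd r (1 : R)
  simp only [smul_eq_mul, mul_one, Nat.succ_eq_add_one] at hy
  have hpow : ∀ j, r ^ (m + 1 + j) * y ^ j = r ^ (m + 1) := by
    intro j
    induction j with
    | zero => simp
    | succ j ih =>
      calc r ^ (m + 1 + (j + 1)) * y ^ (j + 1) = r * (r ^ (m + 1) * y) * (r ^ j * y ^ j) := by ring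
        _ = r ^ (m + 1 + j) * y ^ j := by rw [hy]; ring
        _ = r ^ (m + 1) := ih
  have key : r ^ (m + 1) * (r * (r ^ m * y ^ (m + 1))) = r ^ (m + 1) := by
    linear_combination hpow (m + 1)
  refine ⟨m + 1, r ^ m * y ^ (m + 1), ?_, key⟩
  calc r * (r ^ m * y ^ (m + 1)) * (r * (r ^ m * y ^ (m + 1)))
      = r ^ (m + 1) * (r * (r ^ m * y ^ (m + 1))) * y ^ (m + 1) := by ring
    _ = r * (r ^ m * y ^ (m + 1)) := by rw [key]; ring

theorem IsPrimitiveCentralIdempotent.exists_mul_eq_of_not_isNilpotent {R : Type} [CommRing R]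
    [IsArtinianRing R] {z u : R} (hz : IsPrimitiveCentralIdempotent z) (hu : u * z = u)
    (hnil : ¬IsNilpotent u) : ∃ v, u * v = z := by
  obtain ⟨-, hz, -, hprim⟩ := hz
  obtain ⟨n, s, he, hpow⟩ := IsArtinianRing.exists_isIdempotentElem_mul_pow_eq u
  have hez : u * s * z = u * s := by rw [mul_right_comm, hu]
  refine ⟨s, ?_⟩
  by_contra hne
  by_cases h0 : u * s = 0
  · exact hnil ⟨n, by rw [← hpow, h0, mul_zero]⟩
  refine hprim ⟨u * s, z - u * s, by simp [Set.center_eq_univ], by simp [Set.center_eq_univ],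
    he, ?_, h0, sub_ne_zero.mpr (Ne.symm hne), ?_, by abel⟩
  · rw [IsIdempotentElem, mul_sub, sub_mul, sub_mul, hz.eq, hez, mul_comm z, hez, he.eq]
    abel
  · rw [mul_sub, hez, he.eq, sub_self]

namespace ModuleCat

universe u v

variable {A : Type u} [Ring A]

/-- The value at `1` on the regular module, lifted to the universe of the category. -/
def endIdScalar (ζ : 𝟭 (ModuleCat.{max u v} A) ⟶ 𝟭 _) : A :=
  (ζ.app (of A (ULift.{max u v} A)) (ULift.up 1)).down

theorem endIdScalar_smul (ζ : 𝟭 (ModuleCat.{max u v} A) ⟶ 𝟭 _) {M : ModuleCat.{max u v} A}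
    (x : M) : endIdScalar ζ • x = ζ.app M x := by
  let f : of A (ULift.{max u v} A) ⟶ M :=
    ofHom (LinearMap.toSpanSingleton A M x ∘ₗ ULift.moduleEquiv.toLinearMap)
  have h := congr_arg (fun g => g (ULift.up (1 : A))) (ζ.naturality f)
  simpa [f, endIdScalar] using h.symm

theorem endIdScalar_mem_center (ζ : 𝟭 (ModuleCat.{max u v} A) ⟶ 𝟭 _) :
    endIdScalar ζ ∈ Set.center A := by
  refine Semigroup.mem_center_iff.mpr fun a => ?_
  have h := endIdScalar_smul ζ (M := of A (ULift.{max u v} A)) (a • ULift.up 1)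
  rw [map_smul] at h
  simpa [endIdScalar] using congr_arg ULift.down h.symm

theorem isIso_app_of_mul_eq (ζ : 𝟭 (ModuleCat.{max u v} A) ⟶ 𝟭 _)
    {M : ModuleCat.{max u v} A} {z r : A} (hr : r ∈ Set.center A)
    (hzr : z * endIdScalar ζ * r = z) (hM : ∀ x : M, z • x = x) : IsIso (ζ.app M) := by
  have hrcz : r * endIdScalar ζ * z = z := by
    rw [mul_assoc, ← Semigroup.mem_center_iff.mp (endIdScalar_mem_center ζ) z,
      ← Semigroup.mem_center_iff.mp hr, hzr]
  have h (x : M) : (r * endIdScalar ζ) • x = x := by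
    conv_lhs => rw [← hM x]
    rw [smul_smul, hrcz, hM]
  rw [ConcreteCategory.isIso_iff_bijective, Function.bijective_iff_has_inverse]
  refine ⟨(r • ·), fun x => ?_, fun x => ?_⟩
  · rw [← endIdScalar_smul ζ (M := M) x]
    exact (smul_smul _ _ x).trans (h x)
  · rw [← endIdScalar_smul ζ (M := M), smul_smul, Semigroup.mem_center_iff.mp hr, h]

end ModuleCat

theorem not_isNilpotent_of_injective_smul {R M : Type*} [MonoidWithZero R] [Zero M]
    [MulActionWithZero R M] [Nontrivial M] {a : R} (h : Function.Injective (a • · : M → M)) :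
    ¬IsNilpotent a := by
  rintro ⟨n, hn⟩
  obtain ⟨x, hx⟩ := exists_ne (0 : M)
  refine hx (h.iterate n ?_)
  simp only [smul_iterate, hn, zero_smul, smul_zero]

theorem IsPrimitiveCentralIdempotent.of_coe_center {k A : Type} [CommRing k] [Ring A]
    [Algebra k A] {z : Subalgebra.center k A}
    (hz : IsPrimitiveCentralIdempotent (z : A)) : IsPrimitiveCentralIdempotent z := by
  obtain ⟨-, hidem, hne, hprim⟩ := hz
  refine ⟨by simp [Set.center_eq_univ], Subtype.ext hidem, fun h => hne (by simp [h]), ?_⟩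
  rintro ⟨z₁, z₂, -, -, h₁, h₂, hne₁, hne₂, hmul, hsum⟩
  exact hprim ⟨z₁, z₂, z₁.2, z₂.2, congr_arg Subtype.val h₁, congr_arg Subtype.val h₂,
    by simpa using hne₁, by simpa using hne₂, congr_arg Subtype.val hmul,
    congr_arg Subtype.val hsum⟩

theorem IsPrimitiveCentralIdempotent.exists_mem_center_mul_eq {k A : Type} [Field k] [Ring A]
    [Algebra k A] [FiniteDimensional k A] {z c : A} (hz : IsPrimitiveCentralIdempotent z)
    (hc : c ∈ Set.center A) (hnil : ¬IsNilpotent (z * c)) :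
    ∃ v ∈ Set.center A, z * c * v = z := by
  have : IsArtinianRing (Subalgebra.center k A) := IsArtinianRing.of_finite k _
  let z' : Subalgebra.center k A := ⟨z, hz.1⟩
  let c' : Subalgebra.center k A := ⟨c, hc⟩
  have hidem : z' * z' = z' := Subtype.ext hz.2.1
  obtain ⟨v, hv⟩ := (IsPrimitiveCentralIdempotent.of_coe_center (z := z') hz)
    |>.exists_mul_eq_of_not_isNilpotent (u := z' * c')
      (by rw [mul_right_comm, hidem]) (fun h => hnil (h.map (Subalgebra.val _)))
  exact ⟨v, v.2, congr_arg Subtype.val hv⟩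

theorem stmt_18_general {k A B : Type} [Field k] [Ring A] [Algebra k A] [FiniteDimensional k A]
    [Ring B]
    (E : ModuleCat A ⥤ ModuleCat B) (F : ModuleCat B ⥤ ModuleCat A)
    (adj₁ : E ⊣ F) (adj₂ : F ⊣ E)
    (z : A) (hz : IsPrimitiveCentralIdempotent z)
    (L : ModuleCat A) (hLsimple : IsSimpleModule A L)
    (hLblock : ∀ x : L, z • x = x)
    (hζL : adj₁.unit.app L ≫ adj₂.counit.app L ≠ 0) :
    (∀ M : ModuleCat A, Module.Finite A M → Nontrivial M →
      (∀ x : M, z • x = x) →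
      (∀ N P : Submodule A M, IsCompl N P → N = ⊤ ∨ P = ⊤) →
      IsIso (adj₁.unit.app M ≫ adj₂.counit.app M)) ∧
    (∀ M : ModuleCat A, Module.Finite A M → (∀ x : M, z • x = x) →
      ∃ (ι : M ⟶ F.obj (E.obj M)) (π : F.obj (E.obj M) ⟶ M), ι ≫ π = 𝟙 M) := by
  let ζ : 𝟭 (ModuleCat A) ⟶ 𝟭 (ModuleCat A) := adj₁.unit ≫ adj₂.counit
  set c := ModuleCat.endIdScalar ζ with hc_def
  have hc : c ∈ Set.center A := ModuleCat.endIdScalar_mem_center ζ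
  have hζL_inj : Function.Injective (ζ.app L) :=
    (LinearMap.injective_or_eq_zero (R := A) (M := L) (N := L) (ζ.app L).hom).resolve_right
      fun h => hζL (ModuleCat.hom_ext h)
  have hzc_inj : Function.Injective ((z * c) • · : L → L) := by
    intro x y hxy
    simp only [mul_smul, hLblock, hc_def, ModuleCat.endIdScalar_smul] at hxy
    exact hζL_inj hxy
  have : Nontrivial L := IsSimpleModule.nontrivial A L
  obtain ⟨v, hv, hzcv⟩ := hz.exists_mem_center_mul_eq (k := k) hc
    (not_isNilpotent_of_injective_smul hzc_inj)
  have hiso (M : ModuleCat A) (hM : ∀ x : M, z • x = x) : IsIso (ζ.app M) :=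
    ModuleCat.isIso_app_of_mul_eq ζ hv hzcv hM
  refine ⟨fun M _ _ hM _ => hiso M hM, fun M _ hM => ?_⟩
  have := hiso M hM
  exact ⟨adj₁.unit.app M, adj₂.counit.app M ≫ inv (ζ.app M), by
    rw [← Category.assoc]; exact IsIso.hom_inv_id (ζ.app M)⟩

/-- Let `E : A-mod ⥤ B-mod` and `F : B-mod ⥤ A-mod` be exact biadjoint
functors between module categories of finite-dimensional `k`-algebras, and let
`ζ_X = ε_X ∘ η_X` be the natural endotransformation of the identity coming from the
biadjunction. Let `z` be a primitive central idempotent of `A` (a block `B` of `A`-mod,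
a module `M` lying in `B` iff `z` acts on it as the identity). If `ζ_L ≠ 0` for some
simple `L` in the block, then `ζ_M` is an isomorphism for every (nonzero, finitely
generated) indecomposable `M` in the block, and every finitely generated module `M` in
the block is a direct summand of `FE(M)`. -/
theorem stmt_18 {k A B : Type} [Field k] [Ring A] [Algebra k A] [FiniteDimensional k A]
    [Ring B] [Algebra k B] [FiniteDimensional k B]
    (E : ModuleCat A ⥤ ModuleCat B) (F : ModuleCat B ⥤ ModuleCat A)
    [PreservesFiniteLimits E] [PreservesFiniteColimits E]
    [PreservesFiniteLimits F] [PreservesFiniteColimits F]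
    (adj₁ : E ⊣ F) (adj₂ : F ⊣ E)
    (z : A) (hz : IsPrimitiveCentralIdempotent z)
    (L : ModuleCat A) (hLsimple : IsSimpleModule A L)
    (hLblock : ∀ x : L, z • x = x)
    (hζL : adj₁.unit.app L ≫ adj₂.counit.app L ≠ 0) :
    (∀ M : ModuleCat A, Module.Finite A M → Nontrivial M →
      (∀ x : M, z • x = x) →
      (∀ N P : Submodule A M, IsCompl N P → N = ⊤ ∨ P = ⊤) →
      IsIso (adj₁.unit.app M ≫ adj₂.counit.app M)) ∧
    (∀ M : ModuleCat A, Module.Finite A M → (∀ x : M, z • x = x) →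
      ∃ (ι : M ⟶ F.obj (E.obj M)) (π : F.obj (E.obj M) ⟶ M), ι ≫ π = 𝟙 M) :=
  stmt_18_general (k := k) E F adj₁ adj₂ z hz L hLsimple hLblock hζL
end
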